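/- Let Ω ⊂ ℝ^d be a measurable set, let f(x) = 1{x ∈ Ω}, let X ~ N(0, I_d), and suppose μ = Pr(X ∈ Ω) satisfies 0 < μ < 1. Then the mean dimension of f satisfies ν(f) = Σ_{j=1}^d E[ Pr(X ∈ Ω | X_{−j}) · Pr(X ∈ Ω^c | X_{−j}) ] / (μ(1 − μ)), where the outer expectations are over the conditioning variables X_{−j} = (X_k)_{k≠j}. -/

import Mathlib

/-!
Let `g_j(x) = E[f(X) | X_{-j}]` be the average of `f` over the `j`-th coordinate. Given
`X_{-j}`, the points `X` and `X_{-j}:Z_j` are independent copies, so by Fubini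
`E[f(X) f(X_{-j}:Z_j)] = E[g_j²]` and hence `τ̄²_j(f) = E[f²] - E[g_j²]` for every
square-integrable `f`. For `f = 1_Ω` we have `f² = f` and `E[g_j] = μ`, so
`τ̄²_j = E[g_j (1 - g_j)]`, and `1 - g_j` is the conditional probability of `Ωᶜ`;
finally `σ² = μ(1 - μ)`.
-/

open MeasureTheory ProbabilityTheory Real Filter

noncomputable section

/-- Standard Gaussian measure `N(0, I_d)` on `ℝ^d`. -/
def stdGaussian (d : ℕ) : Measure (Fin d → ℝ) :=
  Measure.pi fun _ => gaussianReal 0 1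

/-- Sobol' total index `τ̄²_j(f) = (1/2)·E[(f(X) − f(X_{−j}:Z_j))²]`. -/
def sobolTau (d : ℕ) (f : (Fin d → ℝ) → ℝ) (j : Fin d) : ℝ :=
  (1 / 2) * ∫ p : (Fin d → ℝ) × (Fin d → ℝ),
    (f p.1 - f (Function.update p.1 j (p.2 j))) ^ 2
      ∂((stdGaussian d).prod (stdGaussian d))

/-- Mean dimension `ν(f) = (Σ_j τ̄²_j(f)) / Var(f(X))`. -/
def meanDim (d : ℕ) (f : (Fin d → ℝ) → ℝ) : ℝ :=
  (∑ j, sobolTau d f j) / variance f (stdGaussian d)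

/-- Gaussian fractional absolute moment `M_η = 2^{η/2} Γ((η+1)/2) / √π`. -/
def Mmom (η : ℝ) : ℝ := 2 ^ (η / 2) / Real.sqrt π * Real.Gamma ((η + 1) / 2)

/-- Standard normal CDF `Φ`. -/
def Phi (t : ℝ) : ℝ := ((gaussianReal 0 1) (Set.Iic t)).toReal

/-- Standard normal density `φ`. -/
def gpdf (x : ℝ) : ℝ := Real.exp (-x ^ 2 / 2) / Real.sqrt (2 * π)

namespace MeasureTheory

theorem MeasurePreserving.integral_comp_of_aestronglyMeasurable {α β G : Type*}
    [MeasurableSpace α] [MeasurableSpace β] [NormedAddCommGroup G] [NormedSpace ℝ G]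
    {μ : Measure α} {ν : Measure β} {T : α → β} (hT : MeasurePreserving T μ ν) {f : β → G} (hf : AEStronglyMeasurable f ν) :
    ∫ x, f (T x) ∂μ = ∫ y, f y ∂ν := by
  rw [← hT.map_eq] at hf ⊢
  exact (integral_map hT.measurable.aemeasurable hf).symm

variable {ι : Type*} [DecidableEq ι] {E : ι → Type*} [∀ i, MeasurableSpace (E i)]
  (ρ : ∀ i, Measure (E i))

/-- `E[f(X) | X_{-j}]` for `X ~ Measure.pi ρ`. -/
def coordAvg (j : ι) (f : (∀ i, E i) → ℝ) (x : ∀ i, E i) : ℝ :=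
  ∫ t, f (Function.update x j t) ∂ρ j

variable {ρ}

theorem coordAvg_indicator_one (j : ι) {Ω : Set (∀ i, E i)} (hΩ : MeasurableSet Ω)
    (x : ∀ i, E i) :
    coordAvg ρ j (Ω.indicator fun _ => 1) x = (ρ j).real (Function.update x j ⁻¹' Ω) :=
  integral_indicator_one ((measurable_update x) hΩ)

theorem coordAvg_update (j : ι) (f : (∀ i, E i) → ℝ) (x : ∀ i, E i) (t : E j) :
    coordAvg ρ j f (Function.update x j t) = coordAvg ρ j f x := by
  simp only [coordAvg, Function.update_idem]

variable [∀ i, IsProbabilityMeasure (ρ i)]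

theorem coordAvg_indicator_compl (j : ι) {Ω : Set (∀ i, E i)} (hΩ : MeasurableSet Ω)
    (x : ∀ i, E i) :
    coordAvg ρ j (Ωᶜ.indicator fun _ => 1) x = 1 - coordAvg ρ j (Ω.indicator fun _ => 1) x := by
  rw [coordAvg_indicator_one j hΩ.compl, coordAvg_indicator_one j hΩ, Set.preimage_compl,
    probReal_compl_eq_one_sub ((measurable_update x) hΩ)]

variable (ρ) [Fintype ι]

theorem measurePreserving_update_prod (j : ι) :
    MeasurePreserving (fun p : (∀ i, E i) × E j => Function.update p.1 j p.2)
      ((Measure.pi ρ).prod (ρ j)) (Measure.pi ρ) := by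
  refine ⟨measurable_update', (Measure.pi_eq fun s hs => ?_).symm⟩
  rw [Measure.map_apply measurable_update' (MeasurableSet.univ_pi hs)]
  have hpre : (fun p : (∀ i, E i) × E j => Function.update p.1 j p.2) ⁻¹' Set.univ.pi s
      = Set.univ.pi (Function.update s j Set.univ) ×ˢ s j := by
    ext ⟨x, t⟩
    simp only [Set.mem_preimage, Set.mem_prod, Set.mem_univ_pi]
    grind
  have hfactor : ∀ i, ρ i (Function.update s j Set.univ i)
      = Function.update (fun i => ρ i (s i)) j 1 i := by
    intro i
    rcases eq_or_ne i j with rfl | hij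
    · simp
    · simp [Function.update_of_ne hij]
  rw [hpre, Measure.prod_prod, Measure.pi_pi]
  simp_rw [hfactor]
  rw [Finset.prod_update_of_mem (Finset.mem_univ j), one_mul, mul_comm,
    ← Finset.mul_prod_erase Finset.univ _ (Finset.mem_univ j), Finset.erase_eq]

theorem measurePreserving_update_eval (j : ι) :
    MeasurePreserving (fun p : (∀ i, E i) × (∀ i, E i) => Function.update p.1 j (p.2 j))
      ((Measure.pi ρ).prod (Measure.pi ρ)) (Measure.pi ρ) :=
  (measurePreserving_update_prod ρ j).comp
    ((MeasurePreserving.id _).prod (measurePreserving_eval ρ j))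

variable {ρ}

theorem integral_coordAvg (j : ι) {f : (∀ i, E i) → ℝ} (hf : Integrable f (Measure.pi ρ)) :
    ∫ x, coordAvg ρ j f x ∂Measure.pi ρ = ∫ x, f x ∂Measure.pi ρ := by
  have hT := measurePreserving_update_prod ρ j
  calc ∫ x, coordAvg ρ j f x ∂Measure.pi ρ
      = ∫ p, f (Function.update p.1 j p.2) ∂(Measure.pi ρ).prod (ρ j) :=
        (integral_prod _ (hT.integrable_comp_of_integrable hf)).symm
    _ = ∫ x, f x ∂Measure.pi ρ := hT.integral_comp_of_aestronglyMeasurable hf.1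

theorem integral_mul_coordAvg (j : ι) {f : (∀ i, E i) → ℝ}
    (hf : Integrable (fun x => f x * coordAvg ρ j f x) (Measure.pi ρ)) :
    ∫ x, f x * coordAvg ρ j f x ∂Measure.pi ρ = ∫ x, coordAvg ρ j f x ^ 2 ∂Measure.pi ρ := by
  rw [← integral_coordAvg j hf]
  congr 1 with x
  rw [coordAvg]
  simp only [coordAvg_update]
  rw [integral_mul_const, sq]
  rfl

theorem Integrable.coordAvg (j : ι) {f : (∀ i, E i) → ℝ} (hf : Integrable f (Measure.pi ρ)) :
    Integrable (coordAvg ρ j f) (Measure.pi ρ) :=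
  ((measurePreserving_update_prod ρ j).integrable_comp_of_integrable hf).integral_prod_left

theorem integral_update_eval (j : ι) {f : (∀ i, E i) → ℝ} (hf : Measurable f) (x : ∀ i, E i) :
    ∫ z, f (Function.update x j (z j)) ∂Measure.pi ρ = coordAvg ρ j f x :=
  integral_comp_eval (hf.comp (measurable_update x)).aestronglyMeasurable

theorem integrable_mul_comp_update_eval (j : ι) {f : (∀ i, E i) → ℝ}
    (hf : MemLp f 2 (Measure.pi ρ)) :
    Integrable (fun p : (∀ i, E i) × (∀ i, E i) => f p.1 * f (Function.update p.1 j (p.2 j)))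
      ((Measure.pi ρ).prod (Measure.pi ρ)) :=
  (hf.comp_measurePreserving measurePreserving_fst).integrable_mul
    (hf.comp_measurePreserving (measurePreserving_update_eval ρ j))

theorem integral_mul_comp_update_eval (j : ι) {f : (∀ i, E i) → ℝ} (hfm : Measurable f)
    (hf : MemLp f 2 (Measure.pi ρ)) :
    ∫ p : (∀ i, E i) × (∀ i, E i), f p.1 * f (Function.update p.1 j (p.2 j))
        ∂(Measure.pi ρ).prod (Measure.pi ρ)
      = ∫ x, coordAvg ρ j f x ^ 2 ∂Measure.pi ρ := by
  have hprod := integrable_mul_comp_update_eval j hf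
  have hinner : ∀ x, ∫ z, f x * f (Function.update x j (z j)) ∂Measure.pi ρ
      = f x * coordAvg ρ j f x := fun x => by
    rw [integral_const_mul, integral_update_eval j hfm]
  have hint := hprod.integral_prod_left
  simp only [hinner] at hint
  rw [integral_prod _ hprod]
  simp only [hinner]
  exact integral_mul_coordAvg j hint

theorem half_integral_sub_update_sq (j : ι) {f : (∀ i, E i) → ℝ} (hfm : Measurable f)
    (hf : MemLp f 2 (Measure.pi ρ)) :
    1 / 2 * ∫ p : (∀ i, E i) × (∀ i, E i), (f p.1 - f (Function.update p.1 j (p.2 j))) ^ 2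
        ∂(Measure.pi ρ).prod (Measure.pi ρ)
      = ∫ x, f x ^ 2 ∂Measure.pi ρ - ∫ x, coordAvg ρ j f x ^ 2 ∂Measure.pi ρ := by
  have hT := measurePreserving_update_eval ρ j
  have hfst : MeasurePreserving Prod.fst ((Measure.pi ρ).prod (Measure.pi ρ)) (Measure.pi ρ) :=
    measurePreserving_fst
  have hA : MemLp (fun p => f p.1) 2 ((Measure.pi ρ).prod (Measure.pi ρ)) :=
    hf.comp_measurePreserving hfst
  have hB : MemLp (fun p => f (Function.update p.1 j (p.2 j))) 2
      ((Measure.pi ρ).prod (Measure.pi ρ)) :=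
    hf.comp_measurePreserving hT
  have hsq : Integrable (fun p => f p.1 ^ 2 + f (Function.update p.1 j (p.2 j)) ^ 2)
      ((Measure.pi ρ).prod (Measure.pi ρ)) :=
    hA.integrable_sq.add hB.integrable_sq
  have hexpand : ∀ a b : ℝ, (a - b) ^ 2 = a ^ 2 + b ^ 2 - 2 * (a * b) := fun a b => by ring
  simp only [hexpand]
  rw [integral_sub hsq ((integrable_mul_comp_update_eval j hf).const_mul 2),
    integral_add hA.integrable_sq hB.integrable_sq, integral_const_mul,
    integral_mul_comp_update_eval j hfm hf,
    hfst.integral_comp_of_aestronglyMeasurable (f := fun x => f x ^ 2) hf.integrable_sq.1,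
    hT.integral_comp_of_aestronglyMeasurable (f := fun x => f x ^ 2) hf.integrable_sq.1]
  ring

theorem integral_coordAvg_indicator_mul_compl (j : ι) {Ω : Set (∀ i, E i)} (hΩ : MeasurableSet Ω) :
    ∫ x, coordAvg ρ j (Ω.indicator fun _ => 1) x * coordAvg ρ j (Ωᶜ.indicator fun _ => 1) x
        ∂Measure.pi ρ
      = (Measure.pi ρ).real Ω - ∫ x, coordAvg ρ j (Ω.indicator fun _ => 1) x ^ 2 ∂Measure.pi ρ := by
  set g := coordAvg ρ j (Ω.indicator fun _ => 1)
  have hind : Integrable (Ω.indicator fun _ => (1 : ℝ)) (Measure.pi ρ) :=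
    (integrable_const 1).indicator hΩ
  have hg : Integrable g (Measure.pi ρ) := hind.coordAvg j
  have hg_mem : ∀ x, g x ∈ Set.Icc (0 : ℝ) 1 := fun x => by
    simp only [g, coordAvg_indicator_one j hΩ]
    exact ⟨measureReal_nonneg, measureReal_le_one⟩
  have hg_sq : Integrable (fun x => g x ^ 2) (Measure.pi ρ) := by
    refine Integrable.of_bound (hg.1.pow 2) 1 (ae_of_all _ fun x => ?_)
    obtain ⟨h0, h1⟩ := hg_mem x
    rw [norm_pow, Real.norm_of_nonneg h0]
    exact pow_le_one₀ h0 h1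
  simp only [coordAvg_indicator_compl j hΩ, mul_one_sub]
  rw [integral_sub hg (by simpa only [sq] using hg_sq), integral_coordAvg j hind,
    integral_indicator_const (1 : ℝ) hΩ, smul_eq_mul, mul_one]
  simp only [g, sq]

theorem half_integral_indicator_sub_update_sq (j : ι) {Ω : Set (∀ i, E i)} (hΩ : MeasurableSet Ω) :
    1 / 2 * ∫ p : (∀ i, E i) × (∀ i, E i),
        (Ω.indicator (fun _ => (1 : ℝ)) p.1 - Ω.indicator (fun _ => 1) (Function.update p.1 j (p.2 j))) ^ 2
        ∂(Measure.pi ρ).prod (Measure.pi ρ)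
      = ∫ x, coordAvg ρ j (Ω.indicator fun _ => 1) x * coordAvg ρ j (Ωᶜ.indicator fun _ => 1) x
        ∂Measure.pi ρ := by
  have hsq : ∀ x, Ω.indicator (fun _ => (1 : ℝ)) x ^ 2 = Ω.indicator (fun _ => 1) x := fun x => by
    by_cases hx : x ∈ Ω <;> simp [hx]
  rw [half_integral_sub_update_sq j (measurable_const.indicator hΩ)
      (memLp_indicator_const 2 hΩ 1 (Or.inr (measure_ne_top _ _))),
    integral_coordAvg_indicator_mul_compl j hΩ]
  simp only [hsq, integral_indicator_const (1 : ℝ) hΩ, smul_eq_mul, mul_one]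

end MeasureTheory

theorem ProbabilityTheory.variance_indicator_one {α : Type*} [MeasurableSpace α] {μ : Measure α}
    [IsProbabilityMeasure μ] {Ω : Set α} (hΩ : MeasurableSet Ω) :
    variance (Ω.indicator fun _ => (1 : ℝ)) μ = μ.real Ω * (1 - μ.real Ω) := by
  have hsq : (Ω.indicator fun _ => (1 : ℝ)) ^ 2 = Ω.indicator fun _ => 1 := by
    funext x
    by_cases hx : x ∈ Ω <;> simp [hx]
  rw [variance_eq_sub (memLp_indicator_const 2 hΩ 1 (Or.inr (measure_ne_top _ _))), hsq,
    integral_indicator_const (1 : ℝ) hΩ, smul_eq_mul, mul_one]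
  ring

instance (d : ℕ) : IsProbabilityMeasure (stdGaussian d) := by
  unfold _root_.stdGaussian
  infer_instance

theorem stmt9_general (d : ℕ) (Ω : Set (Fin d → ℝ)) (hΩ : MeasurableSet Ω)
    (f : (Fin d → ℝ) → ℝ) (hf : ∀ x, f x = Ω.indicator (fun _ => (1 : ℝ)) x)
    (μ0 : ℝ) (hμ0 : μ0 = ((stdGaussian d) Ω).toReal) :
    meanDim d f =
      (∑ j, ∫ x,
        (∫ z, Ω.indicator (fun _ => (1 : ℝ)) (Function.update x j z)
            ∂(gaussianReal 0 1))
        * (∫ z, Ωᶜ.indicator (fun _ => (1 : ℝ)) (Function.update x j z)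
            ∂(gaussianReal 0 1))
        ∂(stdGaussian d)) / (μ0 * (1 - μ0)) := by
  obtain rfl : f = Ω.indicator fun _ => 1 := funext hf
  have hμ : μ0 = (stdGaussian d).real Ω := hμ0
  rw [meanDim, hμ, variance_indicator_one hΩ]
  congr 1
  exact Finset.sum_congr rfl fun j _ => half_integral_indicator_sub_update_sq j hΩ

/-- Equation (4.5): mean dimension of an indicator function. Here
`Pr(X ∈ Ω | X_{−j})` is written as the Gaussian integral over the `j`-th
coordinate of the indicator of `Ω`, and similarly for `Ω^c`. -/
theorem stmt9 (d : ℕ) (Ω : Set (Fin d → ℝ)) (hΩ : MeasurableSet Ω)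
    (f : (Fin d → ℝ) → ℝ) (hf : ∀ x, f x = Ω.indicator (fun _ => (1 : ℝ)) x)
    (μ0 : ℝ) (hμ0 : μ0 = ((stdGaussian d) Ω).toReal)
    (h0 : 0 < μ0) (h1 : μ0 < 1) :
    meanDim d f =
      (∑ j, ∫ x,
        (∫ z, Ω.indicator (fun _ => (1 : ℝ)) (Function.update x j z)
            ∂(gaussianReal 0 1))
        * (∫ z, Ωᶜ.indicator (fun _ => (1 : ℝ)) (Function.update x j z)
            ∂(gaussianReal 0 1))
        ∂(stdGaussian d)) / (μ0 * (1 - μ0)) :=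
  stmt9_general d Ω hΩ f hf μ0 hμ0

end
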